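/- Let d ∈ ℕ, s, α, β, γ, θ ∈ ℝ, p ∈ (0,∞), and q ∈ (0,∞]. Assume a = (a_{j,t,m})_{(j,t,m)∈J} follows a Besov sequence prior with parameters (α,β,γ,θ) and template random variable X satisfying P(X ≠ 0) > 0. If ‖a‖_{b^s_{p,q}} < ∞ almost surely, then γ < 0 and E[|X|^{−d/γ}] < ∞. -/

import Mathlib

open MeasureTheory ProbabilityTheory ENNReal

noncomputable section

/-- The sup-norm `‖m‖_∞` of a lattice point `m ∈ ℤ^d`, as a real number. -/
def znorm {d : ℕ} (m : Fin d → ℤ) : ℝ :=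
  ((Finset.univ.sup fun i => (m i).natAbs : ℕ) : ℝ)

/-- `M_j = (2^{j+1}+1)^d`. -/
def Mnum (d j : ℕ) : ℕ := (2 ^ (j + 1) + 1) ^ d

/-- `N_j = M_{j+1} - M_j`. -/
def Nnum (d j : ℕ) : ℕ := Mnum d (j + 1) - Mnum d j

/-- The `ℓ^p`-norm (with values in `[0,∞]`) of a family of values in `[0,∞]`,
for `p ∈ (0,∞]`. -/
def lpNorm (p : ℝ≥0∞) {ι : Type*} (x : ι → ℝ≥0∞) : ℝ≥0∞ :=
  if p = ∞ then ⨆ i, x i else (∑' i, x i ^ p.toReal) ^ (1 / p.toReal)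

/-- The index set `{(j,t) : j ∈ ℕ₀, t ∈ T_j}` where `T_0 = {F}^d` and
`T_j = {F,M}^d \ {F}^d` for `j ≥ 1`; here `F = false`, `M = true`. -/
def JIdx (d : ℕ) : Type :=
  {jt : ℕ × (Fin d → Bool) // (jt.2 = fun _ => false) ↔ jt.1 = 0}

/-- The Besov sequence (quasi-)norm `‖a‖_{b^s_{p,q}}`, with values in `[0,∞]`,
where `d/p` is read as `0` for `p = ∞`. -/
def besovNorm (d : ℕ) (s : ℝ) (p q : ℝ≥0∞)
    (a : ℕ → (Fin d → Bool) → (Fin d → ℤ) → ℝ) : ℝ≥0∞ :=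
  lpNorm q (fun jt : JIdx d =>
    ENNReal.ofReal ((2 : ℝ) ^ ((jt.1.1 : ℝ) * (s + d / 2 - d * (p⁻¹).toReal))) *
      lpNorm p fun m : Fin d → ℤ => ENNReal.ofReal |a jt.1.1 jt.1.2 m|)

/-- The deterministic coefficient `2^{jα} (j+1)^θ (1+‖m‖_∞/2^j)^{β+(γ-β)𝟙_{j=0}}`
of the Besov sequence prior. -/
def priorCoef (d : ℕ) (α β γ θ : ℝ) (j : ℕ) (m : Fin d → ℤ) : ℝ :=
  (2 : ℝ) ^ ((j : ℝ) * α) * ((j : ℝ) + 1) ^ θ *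
    (1 + znorm m / 2 ^ j) ^ (if j = 0 then γ else β)

/-- The deterministic coefficient `2^{jα} (1+‖m‖_∞/2^j)^{β+(γ-β)𝟙_{j=0}}`
of the Bernoulli–Besov sequence prior. -/
def priorCoefB (d : ℕ) (α β γ : ℝ) (j : ℕ) (m : Fin d → ℤ) : ℝ :=
  (2 : ℝ) ^ ((j : ℝ) * α) * (1 + znorm m / 2 ^ j) ^ (if j = 0 then γ else β)

/-- The Bernoulli success probability `ϱ_{j,m} = 2^{jμ}(1+‖m‖_∞/2^j)^ν`. -/
def rhoB (d : ℕ) (μ' ν : ℝ) (j : ℕ) (m : Fin d → ℤ) : ℝ :=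
  (2 : ℝ) ^ ((j : ℝ) * μ') * (1 + znorm m / 2 ^ j) ^ ν

/-- Property A. -/
def PropertyA (d : ℕ) (s α β γ θ : ℝ) (p q : ℝ≥0∞) : Prop :=
  (if p = ∞ then γ ≤ 0 else γ < -((d : ℝ) / p.toReal)) ∧
  (if p = ∞ then β ≤ 0 else β < -((d : ℝ) / p.toReal)) ∧
  (s + d / 2 + α < 0 ∨
    (s + d / 2 + α = 0 ∧ (if q = ∞ then θ ≤ 0 else θ < -(1 / q.toReal))))

/-- Property A'. -/
def PropertyA' (d : ℕ) (s α β γ μ' ν : ℝ) (p q : ℝ≥0∞) : Prop :=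
  if p = ∞ then
    γ ≤ 0 ∧ β ≤ 0 ∧
      (if q = ∞ then s + d / 2 + α ≤ 0 else s + d / 2 + α < 0)
  else
    γ + (d + ν) / p.toReal < 0 ∧ β + (d + ν) / p.toReal < 0 ∧
      (if q = ∞ then s + d / 2 + α + μ' / p.toReal ≤ 0
        else s + d / 2 + α + μ' / p.toReal < 0)

/-- Property A''. -/
def PropertyA'' (d : ℕ) (s α β γ μ' ν r : ℝ) (p : ℝ≥0∞) : Prop :=
  if p = ∞ then γ ≤ 0 ∧ β ≤ 0 ∧ s + d / 2 + α ≤ 0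
  else
    γ + (d : ℝ) / p.toReal + ν / max r p.toReal < 0 ∧
    β + (d : ℝ) / p.toReal + ν / max r p.toReal < 0 ∧
    s + (d : ℝ) / 2 + α + μ' / max r p.toReal < 0

/-- The quantity `Ξ = max_t Ξ_t` from the master lemma, for a deterministic family `ξ`,
an exponent `pr ∈ (0,∞)` and an enumeration `φ` of `ℤ^d`. -/
def XiQ (d : ℕ) (pr : ℝ) (φ : ℕ → Fin d → ℤ)
    (ξ : ℕ → (Fin d → Bool) → (Fin d → ℤ) → ℝ) : ℝ≥0∞ :=
  ⨆ t : Fin d → Bool, ⨆ j : ℕ,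
    (ENNReal.ofReal ((Mnum d j : ℝ)⁻¹ *
        ∑ τ ∈ Finset.range (Mnum d j), |ξ j t (φ τ)| ^ pr) +
      ⨆ ℓ : ℕ, ⨆ _ : j ≤ ℓ,
        ENNReal.ofReal ((Nnum d ℓ : ℝ)⁻¹ *
          ∑ τ ∈ Finset.Ico (Mnum d ℓ) (Mnum d (ℓ + 1)), |ξ j t (φ τ)| ^ pr))

/-- The quantity `Ξ̃ = max_t Ξ̃_t` from the Bernoulli master lemma. -/
def XiB (d : ℕ) (pr r μ' ν δ : ℝ) (φ : ℕ → Fin d → ℤ)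
    (lam ξ : ℕ → (Fin d → Bool) → (Fin d → ℤ) → ℝ) : ℝ≥0∞ :=
  ⨆ t : Fin d → Bool, ⨆ j : ℕ,
    (ENNReal.ofReal ((Mnum d j : ℝ)⁻¹ *
        ∑ τ ∈ Finset.range (Mnum d j),
          rhoB d μ' ν j (φ τ) ^ (pr / max r pr * (δ - 1)) * lam j t (φ τ) *
            |ξ j t (φ τ)| ^ pr) +
      ⨆ ℓ : ℕ, ⨆ _ : j ≤ ℓ,
        ENNReal.ofReal ((Nnum d ℓ : ℝ)⁻¹ *
          ∑ τ ∈ Finset.Ico (Mnum d ℓ) (Mnum d (ℓ + 1)),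
            rhoB d μ' ν j (φ τ) ^ (pr / max r pr * (δ - 1)) * lam j t (φ τ) *
              |ξ j t (φ τ)| ^ pr))

/-- `exp(c · x^r)` for `x ∈ [0,∞]`, equal to `∞` for `x = ∞`. -/
def expENN (c r : ℝ) (x : ℝ≥0∞) : ℝ≥0∞ :=
  if x = ∞ then ∞ else ENNReal.ofReal (Real.exp (c * x.toReal ^ r))



namespace Stmt11Aux

open MeasureTheory ProbabilityTheory ENNReal Filter

lemma znorm_nonneg {d : ℕ} (m : Fin d → ℤ) : 0 ≤ znorm m := Nat.cast_nonneg _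

lemma priorCoef_zero (d : ℕ) (α β γ θ : ℝ) (m : Fin d → ℤ) :
    priorCoef d α β γ θ 0 m = (1 + znorm m) ^ γ := by
  simp [priorCoef]

lemma le_lpNorm {q : ℝ≥0∞} (hq : 0 < q) {ι : Type*} (x : ι → ℝ≥0∞) (i : ι) :
    x i ≤ lpNorm q x := by
  unfold _root_.lpNorm
  split_ifs with h
  · exact le_iSup x i
  · have hqr : 0 < q.toReal := ENNReal.toReal_pos hq.ne' h
    rw [one_div]
    calc x i = (x i ^ q.toReal) ^ q.toReal⁻¹ := (ENNReal.rpow_rpow_inv hqr.ne' _).symm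
      _ ≤ (∑' j, x j ^ q.toReal) ^ q.toReal⁻¹ :=
        ENNReal.rpow_le_rpow (ENNReal.le_tsum i) (by positivity)

lemma iIndepSet_comp {Ω ι κ : Type*} [MeasurableSpace Ω] {μ : Measure Ω}
    (f : ι → Ω → ℝ) (hf : ∀ i, Measurable (f i))
    (hindep : iIndepFun f μ)
    (idx : κ → ι) (hinj : Function.Injective idx)
    (S : κ → Set ℝ) (hS : ∀ k, MeasurableSet (S k)) :
    iIndepSet (fun k => f (idx k) ⁻¹' S k) μ := by
  classical
  rw [iIndepSet_iff_meas_biInter (fun k => (hf _) (hS k))]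
  intro s
  set sets : ι → Set ℝ := fun i => ⋂ k ∈ s.filter (fun k => idx k = i), S k with hsets
  have hmem : ∀ k ∈ s, sets (idx k) = S k := by
    intro k hk
    have hfil : s.filter (fun k' => idx k' = idx k) = {k} := by
      ext k'
      simp only [Finset.mem_filter, Finset.mem_singleton]
      constructor
      · exact fun h => hinj h.2
      · rintro rfl
        exact ⟨hk, rfl⟩
    rw [hsets]
    simp [hfil]
  have hsetsm : ∀ i, i ∈ s.image idx → MeasurableSet (sets i) := by
    intro i _
    exact MeasurableSet.biInter ((s.filter (fun k => idx k = i)).finite_toSet.countable)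
      (fun k _ => hS k)
  have key := hindep.measure_inter_preimage_eq_mul (s.image idx) hsetsm
  have hL : (⋂ i ∈ s.image idx, f i ⁻¹' sets i) = ⋂ k ∈ s, f (idx k) ⁻¹' S k := by
    rw [Finset.set_biInter_finset_image]
    exact Set.iInter₂_congr fun k hk => by rw [hmem k hk]
  have hR : (∏ i ∈ s.image idx, μ (f i ⁻¹' sets i)) = ∏ k ∈ s, μ (f (idx k) ⁻¹' S k) := by
    rw [Finset.prod_image (fun a _ b _ h => hinj h)]
    exact Finset.prod_congr rfl fun k hk => by rw [hmem k hk]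
  rw [hL, hR] at key
  exact key

lemma bc2 {Ω : Type*} [MeasurableSpace Ω] {μ : Measure Ω} [IsProbabilityMeasure μ]
    {A : ℕ → Set Ω} (hA : ∀ n, MeasurableSet (A n)) (hind : ProbabilityTheory.iIndepSet A μ)
    (hfin : ∀ᵐ ω ∂μ, {n | ω ∈ A n}.Finite) : ∑' n, μ (A n) ≠ ∞ := by
  intro htop
  have h1 := ProbabilityTheory.measure_limsup_eq_one hA hind htop
  have hms : MeasurableSet (limsup A atTop) := MeasurableSet.measurableSet_limsup hA
  have hae : ∀ᵐ ω ∂μ, ω ∈ limsup A atTop := by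
    rw [ae_iff]
    have h2 : {ω | ¬ ω ∈ limsup A atTop} = (limsup A atTop)ᶜ := rfl
    rw [h2, measure_compl hms (measure_ne_top μ _), h1, measure_univ, tsub_self]
  obtain ⟨ω, h2, h3⟩ := (hfin.and hae).exists
  exact (Nat.frequently_atTop_iff_infinite.mp (mem_limsup_iff_frequently_mem.mp h3)) h2

lemma key_lemma {ι κ Ω : Type*} [MeasurableSpace Ω] {μ : Measure Ω} [IsProbabilityMeasure μ]
    (e : ℕ ≃ κ)
    (F : ι → Ω → ℝ) (hFm : ∀ i, Measurable (F i))
    (hind : iIndepFun F μ)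
    (idx : κ → ι) (hinj : Function.Injective idx)
    {pr : ℝ} (hpr : 0 < pr)
    (co c : κ → ℝ) (hco : ∀ k, 0 ≤ co k) {δ : ℝ} (hδ : 0 < δ)
    (hlb : ∀ k, δ ≤ co k * c k)
    (hS : ∀ᵐ ω ∂μ, ∑' k, (ENNReal.ofReal (co k * |F (idx k) ω|)) ^ pr < ∞) :
    ∑' k, μ {ω | c k ≤ |F (idx k) ω|} ≠ ∞ := by
  intro htop
  have hSm : ∀ k : κ, MeasurableSet {x : ℝ | c k ≤ |x|} :=
    fun k => measurableSet_le measurable_const measurable_id.abs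
  set A : ℕ → Set Ω := fun n => F (idx (e n)) ⁻¹' {x | c (e n) ≤ |x|} with hA
  have hAm : ∀ n, MeasurableSet (A n) := fun n => (hFm _) (hSm (e n))
  have hAset : iIndepSet A μ :=
    iIndepSet_comp F hFm hind (fun n => idx (e n)) (hinj.comp e.injective)
      (fun n => {x | c (e n) ≤ |x|}) (fun n => hSm (e n))
  have hsum : ∑' n, μ (A n) = ∞ := by
    have h1 : ∑' n, μ (A n) = ∑' k, μ {ω | c k ≤ |F (idx k) ω|} :=
      e.tsum_eq (fun k => μ {ω | c k ≤ |F (idx k) ω|})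
    rw [h1, htop]
  have hfin : ∀ᵐ ω ∂μ, {n | ω ∈ A n}.Finite := by
    filter_upwards [hS] with ω hω
    have hε : (ENNReal.ofReal δ ^ pr) ≠ 0 :=
      (ENNReal.rpow_pos (ENNReal.ofReal_pos.mpr hδ) ENNReal.ofReal_ne_top).ne'
    have hfin2 : {k | ENNReal.ofReal δ ^ pr ≤ (ENNReal.ofReal (co k * |F (idx k) ω|)) ^ pr}.Finite :=
      ENNReal.finite_const_le_of_tsum_ne_top hω.ne hε
    refine ((hfin2.preimage (e.injective.injOn)).subset ?_)
    intro n hn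
    have hn' : c (e n) ≤ |F (idx (e n)) ω| := hn
    have h1 : δ ≤ co (e n) * |F (idx (e n)) ω| :=
      le_trans (hlb (e n)) (mul_le_mul_of_nonneg_left hn' (hco (e n)))
    exact ENNReal.rpow_le_rpow (ENNReal.ofReal_le_ofReal h1) hpr.le
  exact bc2 hAm hAset hfin hsum

lemma pointwise_bound {d : ℕ} {γ : ℝ} (hγ : γ < 0) {x : ℝ} (hx : 0 ≤ x)
    (g : (Fin d → ℤ) → ℝ≥0∞) (hg : ∀ m, (1 + znorm m) ^ (-γ) ≤ x → 1 ≤ g m) :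
    ENNReal.ofReal (x ^ (-(d : ℝ) / γ)) ≤ ENNReal.ofReal ((5 : ℝ) ^ d) + ∑' m, g m := by
  have hγne : γ ≠ 0 := hγ.ne
  set R := x ^ (-1 / γ) with hR
  have hRx : 0 ≤ R := Real.rpow_nonneg hx _
  have hxd : x ^ (-(d : ℝ) / γ) = R ^ (d : ℝ) := by
    rw [hR, ← Real.rpow_mul hx]
    congr 1
    field_simp
  rcases le_or_gt R 5 with hR5 | hR5
  · refine le_trans (ENNReal.ofReal_le_ofReal ?_) le_self_add
    rw [hxd, Real.rpow_natCast]
    exact pow_le_pow_left₀ hRx hR5 d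
  · set K : ℕ := ⌊R⌋₊ - 2 with hK
    have h5 : 5 ≤ ⌊R⌋₊ := Nat.le_floor (by norm_num; linarith)
    have hfl : (⌊R⌋₊ : ℝ) ≤ R := Nat.floor_le (by linarith)
    have hfl2 : R < (⌊R⌋₊ : ℝ) + 1 := Nat.lt_floor_add_one R
    have hKr : (K : ℝ) = (⌊R⌋₊ : ℝ) - 2 := by
      have h2 : 2 ≤ ⌊R⌋₊ := by omega
      rw [hK]
      push_cast [h2]
      ring
    have hKR : (K : ℝ) + 1 ≤ R := by linarith
    have hR2K : R ≤ 2 * (K : ℝ) + 1 := by linarith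
    set C : Finset (Fin d → ℤ) := Fintype.piFinset (fun _ => Finset.Icc (-(K : ℤ)) K) with hC
    have hcard : C.card = (2 * K + 1) ^ d := by
      rw [hC, Fintype.card_piFinset]
      have hIc : (Finset.Icc (-(K : ℤ)) K).card = 2 * K + 1 := by
        rw [Int.card_Icc]
        omega
      simp [hIc]
    have hmemC : ∀ m ∈ C, (1 + znorm m) ^ (-γ) ≤ x := by
      intro m hm
      have hz : znorm m ≤ (K : ℝ) := by
        have hsup : (Finset.univ.sup fun i => (m i).natAbs) ≤ K := by
          apply Finset.sup_le
          intro i _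
          have hmi := Fintype.mem_piFinset.mp hm i
          rw [Finset.mem_Icc] at hmi
          omega
        unfold znorm
        exact_mod_cast hsup
      have h1z : 1 + znorm m ≤ R := by linarith
      have hzn := znorm_nonneg m
      calc (1 + znorm m) ^ (-γ) ≤ R ^ (-γ) :=
              Real.rpow_le_rpow (by linarith) h1z (by linarith)
        _ = x := by
              rw [hR, ← Real.rpow_mul hx, show -1 / γ * -γ = 1 by field_simp, Real.rpow_one]
    have hsum : (C.card : ℝ≥0∞) ≤ ∑' m, g m := by
      calc (C.card : ℝ≥0∞) = ∑ m ∈ C, (1 : ℝ≥0∞) := by simp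
        _ ≤ ∑ m ∈ C, g m := Finset.sum_le_sum fun m hm => hg m (hmemC m hm)
        _ ≤ ∑' m, g m := ENNReal.sum_le_tsum C
    have hfinal : ENNReal.ofReal (x ^ (-(d : ℝ) / γ)) ≤ (C.card : ℝ≥0∞) := by
      rw [hxd, hcard]
      have hreal : R ^ (d : ℝ) ≤ ((2 * K + 1 : ℕ) : ℝ) ^ d := by
        rw [Real.rpow_natCast]
        apply pow_le_pow_left₀ hRx
        push_cast
        linarith
      calc ENNReal.ofReal (R ^ (d : ℝ)) ≤ ENNReal.ofReal (((2 * K + 1 : ℕ) : ℝ) ^ d) :=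
            ENNReal.ofReal_le_ofReal hreal
        _ = (((2 * K + 1) ^ d : ℕ) : ℝ≥0∞) := by
            rw [← Nat.cast_pow]
            exact ENNReal.ofReal_natCast _
    exact le_trans hfinal (le_trans hsum le_add_self)

end Stmt11Aux

open Stmt11Aux

/-- sharpness. Let `p ∈ (0,∞)`. If `a` follows a Besov sequence prior
with parameters `(α,β,γ,θ)` and template random variable `X` with `P(X ≠ 0) > 0`, and
`‖a‖_{b^s_{p,q}} < ∞` almost surely, then `γ < 0` and `E[|X|^{-d/γ}] < ∞`. -/
theorem stmt11 (d : ℕ) (hd : 0 < d) (s α β γ θ : ℝ) (p q : ℝ≥0∞)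
    (hp0 : 0 < p) (hp : p ≠ ∞) (hq : 0 < q)
    {Ω : Type*} [MeasurableSpace Ω] (μ : Measure Ω) [IsProbabilityMeasure μ]
    (X : Ω → ℝ) (hX : Measurable X)
    (ξ : ℕ × (Fin d → Bool) × (Fin d → ℤ) → Ω → ℝ)
    (hmeas : ∀ i, Measurable (ξ i))
    (hindep : iIndepFun ξ μ)
    (hident : ∀ i, IdentDistrib (ξ i) X μ μ)
    (hne : 0 < μ {ω | X ω ≠ 0})
    (hfin : ∀ᵐ ω ∂μ,
      besovNorm d s p q (fun j t m => priorCoef d α β γ θ j m * ξ (j, t, m) ω) < ∞) :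
    γ < 0 ∧ ∫⁻ ω, ENNReal.ofReal (|X ω| ^ (-(d : ℝ) / γ)) ∂μ < ∞ := by
  classical
  have hdne : Nonempty (Fin d) := ⟨⟨0, hd⟩⟩
  haveI : Infinite (Fin d → ℤ) := by infer_instance
  haveI : Denumerable (Fin d → ℤ) := Denumerable.ofEncodableOfInfinite _
  let e : ℕ ≃ (Fin d → ℤ) := (Denumerable.eqv _).symm
  set Fb : Fin d → Bool := fun _ => false with hFb
  have hpr : 0 < p.toReal := ENNReal.toReal_pos hp0.ne' hp
  set pr := p.toReal with hprdef
  have hinj : Function.Injective (fun m : Fin d → ℤ => ((0, Fb, m) : ℕ × (Fin d → Bool) × (Fin d → ℤ))) := by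
    intro m1 m2 h
    simpa using h
  -- reduce the Besov norm hypothesis to the (0, F) slice
  have hS : ∀ᵐ ω ∂μ, ∑' m : Fin d → ℤ,
      ENNReal.ofReal ((1 + znorm m) ^ γ * |ξ (0, Fb, m) ω|) ^ pr < ∞ := by
    filter_upwards [hfin] with ω hω
    set a : ℕ → (Fin d → Bool) → (Fin d → ℤ) → ℝ :=
      fun j t m => priorCoef d α β γ θ j m * ξ (j, t, m) ω with ha
    let jt0 : JIdx d := ⟨(0, Fb), ⟨fun _ => rfl, fun _ => rfl⟩⟩
    have h3 : (ENNReal.ofReal ((2 : ℝ) ^ (((0 : ℕ) : ℝ) * (s + d / 2 - d * (p⁻¹).toReal))) *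
        lpNorm p (fun m => ENNReal.ofReal |a 0 Fb m|)) < ∞ :=
      lt_of_le_of_lt (le_lpNorm hq _ jt0) hω
    rw [Nat.cast_zero, zero_mul, Real.rpow_zero, ENNReal.ofReal_one, one_mul] at h3
    rw [_root_.lpNorm, if_neg hp, one_div] at h3
    have h4 : ∑' m : Fin d → ℤ, ENNReal.ofReal |a 0 Fb m| ^ pr < ∞ :=
      (ENNReal.rpow_lt_top_iff_of_pos (by positivity)).mp h3
    have h5 : ∀ m : Fin d → ℤ,
        ENNReal.ofReal |a 0 Fb m| = ENNReal.ofReal ((1 + znorm m) ^ γ * |ξ (0, Fb, m) ω|) := by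
      intro m
      have hpc : 0 ≤ priorCoef d α β γ θ 0 m := by
        rw [priorCoef_zero]
        have := znorm_nonneg m
        positivity
      rw [show a 0 Fb m = priorCoef d α β γ θ 0 m * ξ (0, Fb, m) ω from rfl, abs_mul,
        abs_of_nonneg hpc, priorCoef_zero]
    calc ∑' m : Fin d → ℤ, ENNReal.ofReal ((1 + znorm m) ^ γ * |ξ (0, Fb, m) ω|) ^ pr
        = ∑' m : Fin d → ℤ, ENNReal.ofReal |a 0 Fb m| ^ pr := by
          exact tsum_congr fun m => by rw [h5 m]
      _ < ∞ := h4
  -- Step 1: γ < 0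
  have hγ : γ < 0 := by
    by_contra hγ'
    push_neg at hγ'
    have hU : {ω | X ω ≠ 0} = ⋃ n : ℕ, {ω | (1 : ℝ) / (n + 1) ≤ |X ω|} := by
      ext ω
      simp only [Set.mem_setOf_eq, Set.mem_iUnion]
      constructor
      · intro h
        obtain ⟨n, hn⟩ := exists_nat_one_div_lt (abs_pos.mpr h)
        exact ⟨n, hn.le⟩
      · rintro ⟨n, hn⟩ h0
        rw [h0] at hn
        simp only [abs_zero] at hn
        have : (0 : ℝ) < 1 / (n + 1) := by positivity
        linarith
    have hex : ∃ n : ℕ, μ {ω | (1 : ℝ) / (n + 1) ≤ |X ω|} ≠ 0 := by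
      by_contra hc
      push_neg at hc
      have h0 : μ {ω | X ω ≠ 0} = 0 := by
        rw [hU]
        exact measure_iUnion_null hc
      exact absurd h0 hne.ne'
    obtain ⟨n, hρ⟩ := hex
    set ε : ℝ := 1 / (n + 1) with hε'
    have hε : 0 < ε := by positivity
    have hlb : ∀ m : Fin d → ℤ, ε ≤ (1 + znorm m) ^ γ * ε := by
      intro m
      have h1 : (1 : ℝ) ^ γ ≤ (1 + znorm m) ^ γ :=
        Real.rpow_le_rpow zero_le_one (by linarith [znorm_nonneg m]) hγ'
      rw [Real.one_rpow] at h1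
      nlinarith
    have hkey := key_lemma e ξ hmeas hindep (fun m : Fin d → ℤ => (0, Fb, m)) hinj hpr
      (fun m => (1 + znorm m) ^ γ) (fun _ => ε)
      (fun m => Real.rpow_nonneg (by linarith [znorm_nonneg m]) γ) hε hlb hS
    apply hkey
    have hconst : ∀ m : Fin d → ℤ, μ {ω | ε ≤ |ξ (0, Fb, m) ω|} = μ {ω | ε ≤ |X ω|} := by
      intro m
      exact (hident (0, Fb, m)).measure_mem_eq
        (measurableSet_le measurable_const measurable_id.abs)
    calc ∑' m : Fin d → ℤ, μ {ω | ε ≤ |ξ (0, Fb, m) ω|}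
        = ∑' _ : Fin d → ℤ, μ {ω | ε ≤ |X ω|} := tsum_congr hconst
      _ = ∞ := ENNReal.tsum_const_eq_top_of_ne_zero hρ
  refine ⟨hγ, ?_⟩
  -- Step 2: moments
  have hlb2 : ∀ m : Fin d → ℤ, (1 : ℝ) ≤ (1 + znorm m) ^ γ * (1 + znorm m) ^ (-γ) := by
    intro m
    have hzn := znorm_nonneg m
    rw [← Real.rpow_add (by linarith), add_neg_cancel, Real.rpow_zero]
  have hkey := key_lemma e ξ hmeas hindep (fun m : Fin d → ℤ => (0, Fb, m)) hinj hpr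
    (fun m => (1 + znorm m) ^ γ) (fun m => (1 + znorm m) ^ (-γ))
    (fun m => Real.rpow_nonneg (by linarith [znorm_nonneg m]) γ) one_pos hlb2 hS
  have hconv : ∀ m : Fin d → ℤ, μ {ω | (1 + znorm m) ^ (-γ) ≤ |ξ (0, Fb, m) ω|}
      = μ {ω | (1 + znorm m) ^ (-γ) ≤ |X ω|} := by
    intro m
    exact (hident (0, Fb, m)).measure_mem_eq
      (measurableSet_le measurable_const measurable_id.abs)
  have htsumX : ∑' m : Fin d → ℤ, μ {ω | (1 + znorm m) ^ (-γ) ≤ |X ω|} ≠ ∞ := by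
    rw [← tsum_congr hconv]
    exact hkey
  have hXind : ∀ m : Fin d → ℤ, MeasurableSet {ω | (1 + znorm m) ^ (-γ) ≤ |X ω|} :=
    fun m => measurableSet_le measurable_const hX.abs
  have hpt : ∀ ω, ENNReal.ofReal (|X ω| ^ (-(d : ℝ) / γ)) ≤
      ENNReal.ofReal ((5 : ℝ) ^ d) + ∑' m : Fin d → ℤ,
        Set.indicator {ω' | (1 + znorm m) ^ (-γ) ≤ |X ω'|} (fun _ => (1 : ℝ≥0∞)) ω := by
    intro ω
    refine pointwise_bound hγ (abs_nonneg (X ω)) _ (fun m hm => ?_)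
    exact le_of_eq (Set.indicator_of_mem
      (show ω ∈ {ω' | (1 + znorm m) ^ (-γ) ≤ |X ω'|} from hm) (fun _ => (1 : ℝ≥0∞))).symm
  calc ∫⁻ ω, ENNReal.ofReal (|X ω| ^ (-(d : ℝ) / γ)) ∂μ
      ≤ ∫⁻ ω, (ENNReal.ofReal ((5 : ℝ) ^ d) + ∑' m : Fin d → ℤ,
          Set.indicator {ω' | (1 + znorm m) ^ (-γ) ≤ |X ω'|} (fun _ => (1 : ℝ≥0∞)) ω) ∂μ :=
        lintegral_mono hpt
    _ = ENNReal.ofReal ((5 : ℝ) ^ d) +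
        ∑' m : Fin d → ℤ, μ {ω | (1 + znorm m) ^ (-γ) ≤ |X ω|} := by
        rw [lintegral_add_left measurable_const, lintegral_const, measure_univ, mul_one,
          lintegral_tsum (fun m => (measurable_const.indicator (hXind m)).aemeasurable)]
        congr 1
        exact tsum_congr fun m => lintegral_indicator_one (hXind m)
    _ < ∞ := ENNReal.add_lt_top.mpr ⟨ENNReal.ofReal_lt_top, lt_top_iff_ne_top.mpr htsumX⟩

end
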